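/- With F and G the projectors built from the BB84 string states and two arbitrary projective measurements as in the context (with shift string k ∈ {0,1}^n), the operator 2^{W(k)} · F G F is an orthogonal projection, where W(k) is the Hamming weight of k. -/

import Mathlib

open Matrix ComplexOrder
open scoped BigOperators

noncomputable section

/-- The computational-basis qubit state `|a⟩`. -/
def bket (a : Bool) : EuclideanSpace ℂ (Fin 2) := WithLp.toLp 2 fun i =>
  if i = (if a then 1 else 0) then 1 else 0

/-- The Hadamard-basis qubit state `|â⟩ = (|0⟩ + (−1)^a |1⟩)/√2`. -/
def hket (a : Bool) : EuclideanSpace ℂ (Fin 2) := WithLp.toLp 2 fun i =>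
  (Real.sqrt 2 : ℂ)⁻¹ * (if a ∧ i = 1 then -1 else 1)

/-- The BB84 two-qubit state `|ψ^s_{r₀ r₁}⟩`: `|r₀⟩` (computational basis) in tensor
factor `s` and `|r̂₁⟩` (Hadamard basis) in tensor factor `1 − s`. -/
def psiBB84 (s r0 r1 : Bool) : EuclideanSpace ℂ (Fin 2 × Fin 2) := WithLp.toLp 2 fun p =>
  if s then hket r1 p.1 * bket r0 p.2 else bket r0 p.1 * hket r1 p.2

/-- The `n`-pair BB84 string state `|Ψ^s_{r₀ r₁}⟩ = ⊗_j |ψ^{s_j}_{(r₀)_j (r₁)_j}⟩`. -/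
def PsiBB84 {n : ℕ} (s r0 r1 : Fin n → Bool) :
    EuclideanSpace ℂ (Fin n → Fin 2 × Fin 2) := WithLp.toLp 2 fun f =>
  ∏ j, psiBB84 (s j) (r0 j) (r1 j) (f j)

/-- Hamming weight of a bit string. -/
def hamW {n : ℕ} (k : Fin n → Bool) : ℕ := (Finset.univ.filter fun j => k j = true).card

/-- The rank-one projection `|v⟩⟨v|` as a matrix. -/
def vproj {ι : Type*} (v : EuclideanSpace ℂ ι) : Matrix ι ι ℂ :=
  fun i j => v i * (starRingEnd ℂ) (v j)

/-- Triple Kronecker product, with index type `ι₀ × ι₁ × ι₂`. -/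
def kron3 {ι₀ ι₁ ι₂ : Type*} (A : Matrix ι₀ ι₀ ℂ) (B : Matrix ι₁ ι₁ ℂ)
    (C : Matrix ι₂ ι₂ ℂ) : Matrix (ι₀ × ι₁ × ι₂) (ι₀ × ι₁ × ι₂) ℂ :=
  fun p q => A p.1 q.1 * B p.2.1 q.2.1 * C p.2.2 q.2.2

/-- A projective measurement: a family of mutually orthogonal projections summing to `1`. -/
def IsProjMeasurement {X ι : Type*} [Fintype X] [Fintype ι] [DecidableEq ι]
    (P : X → Matrix ι ι ℂ) : Prop :=
  (∀ x, P x * P x = P x) ∧ (∀ x, (P x)ᴴ = P x) ∧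
    (∀ x y, x ≠ y → P x * P y = 0) ∧ ∑ x, P x = 1

/-- `r_{b'}`: selects `r₀` if `b' = 0` and `r₁` if `b' = 1`. -/
def rsel {n : ℕ} (b : Bool) (r0 r1 : Fin n → Bool) : Fin n → Bool := if b then r1 else r0

/-- The operator norm (Schatten ∞-norm, largest singular value). -/
def opNorm {ι : Type*} [Fintype ι] [DecidableEq ι] (A : Matrix ι ι ℂ) : ℝ :=
  ‖Matrix.toEuclideanCLM (𝕜 := ℂ) A‖


/-!
Group the terms of `F` by `x = r_{b'}` and those of `G` by `y = r_{b̄'}`. Since the two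
measurements are complete, both operators are block diagonal for the joint measurement
`Π₀^x ⊗ Π₁^y`, with blocks `Q_x` and `Q'_y` on the BB84 register, so `F G F` has blocks
`Q_x Q'_y Q_x`. Both `Q_x` and `Q'_y` factor over the `n` qubit pairs. At a pair with `k_j = 0`
the two factors act on different qubits and commute; at a pair with `k_j = 1` they project the
same qubit onto a computational and a Hadamard basis state, so `Q Q' Q = Q / 2`.
Hence every block satisfies `T² = 2^{-W(k)} T`.
-/

open scoped Kronecker

namespace Matrix

variable {R : Type*} [CommSemiring R] {σ l m n p : Type*}

lemma sum_kronecker (s : Finset σ) (A : σ → Matrix l m R) (B : Matrix n p R) :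
    (∑ i ∈ s, A i) ⊗ₖ B = ∑ i ∈ s, A i ⊗ₖ B := by
  ext; simp [Matrix.sum_apply, Finset.sum_mul]

lemma kronecker_sum (s : Finset σ) (A : Matrix l m R) (B : σ → Matrix n p R) :
    A ⊗ₖ (∑ i ∈ s, B i) = ∑ i ∈ s, A ⊗ₖ B i := by
  ext; simp [Matrix.sum_apply, Finset.mul_sum]

end Matrix

section PiKron

variable {R : Type*} [CommSemiring R] {ι α : Type*} [Fintype ι]

def piKron (A : ι → Matrix α α R) : Matrix (ι → α) (ι → α) R :=
  Matrix.of fun f g => ∏ i, A i (f i) (g i)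

@[simp] lemma piKron_apply (A : ι → Matrix α α R) (f g : ι → α) :
    piKron A f g = ∏ i, A i (f i) (g i) := rfl

lemma piKron_smul (c : ι → R) (A : ι → Matrix α α R) :
    piKron (fun i => c i • A i) = (∏ i, c i) • piKron A := by
  ext f g
  simp only [piKron_apply, Matrix.smul_apply, smul_eq_mul, Finset.prod_mul_distrib]

variable [DecidableEq ι]

lemma piKron_mul [Fintype α] (A B : ι → Matrix α α R) :
    piKron A * piKron B = piKron fun i => A i * B i := by
  ext f g
  simp only [mul_apply, piKron_apply, Fintype.prod_sum, Finset.prod_mul_distrib]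

lemma sum_piKron {β : Type*} [Fintype β] (M : ι → β → Matrix α α R) :
    ∑ z : ι → β, piKron (fun i => M i (z i)) = piKron fun i => ∑ b, M i b := by
  ext f g
  simp only [Matrix.sum_apply, piKron_apply, Fintype.prod_sum]

end PiKron

section RankOne

variable {ι : Type*} (v w : EuclideanSpace ℂ ι)

lemma vproj_conjTranspose : (vproj v)ᴴ = vproj v := by
  ext; simp [vproj, mul_comm]

lemma vproj_eq_vecMulVec : vproj v = vecMulVec v (star v) := rfl

variable [Fintype ι]

lemma vproj_mul_self : vproj v * vproj v = inner ℂ v v • vproj v := by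
  simp only [vproj_eq_vecMulVec, vecMulVec_mul_vecMulVec, EuclideanSpace.inner_eq_star_dotProduct]
  ext i j
  simp [vecMulVec_apply, dotProduct_comm]
  ring

lemma vproj_mul_vproj_mul_vproj :
    vproj v * vproj w * vproj v = (inner ℂ v w * inner ℂ w v) • vproj v := by
  simp only [vproj_eq_vecMulVec, vecMulVec_mul_vecMulVec, EuclideanSpace.inner_eq_star_dotProduct]
  ext i j
  simp [vecMulVec_apply, dotProduct_comm]
  ring

end RankOne

section Sandwich

variable {A : Type*} [Semiring A] {a b : A}

lemma sandwich_mul_self_of_commute (ha : IsIdempotentElem a) (hb : IsIdempotentElem b)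
    (hab : Commute a b) : a * b * a * (a * b * a) = a * b * a := by
  have hsand : a * b * a = a * b := by rw [mul_assoc, ← hab.eq, ← mul_assoc, ha.eq]
  rw [hsand]
  exact (ha.mul_of_commute hab hb).eq

lemma sandwich_mul_self_of_eq_smul {R : Type*} [CommSemiring R] [Algebra R A] {c : R}
    (ha : IsIdempotentElem a) (h : a * b * a = c • a) :
    a * b * a * (a * b * a) = c • (a * b * a) := by
  rw [h, smul_mul_smul_comm, ha.eq, smul_smul]

end Sandwich

def qket (b x : Bool) : EuclideanSpace ℂ (Fin 2) := bif b then hket x else bket x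

lemma sqrt2_inv_mul_self : ((Real.sqrt 2 : ℂ))⁻¹ * ((Real.sqrt 2 : ℂ))⁻¹ = 2⁻¹ := by
  rw [← mul_inv, ← Complex.ofReal_mul, Real.mul_self_sqrt zero_le_two]
  norm_num

lemma inner_qket_self (b x : Bool) : inner ℂ (qket b x) (qket b x) = 1 := by
  rw [EuclideanSpace.inner_eq_star_dotProduct]
  cases b <;> cases x <;> simp [qket, bket, hket, dotProduct, sqrt2_inv_mul_self]
  norm_num

lemma inner_qket_mul_inner_qket_not (b x y : Bool) :
    inner ℂ (qket b x) (qket (!b) y) * inner ℂ (qket (!b) y) (qket b x) = 2⁻¹ := by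
  cases b <;> cases x <;> cases y <;>
    simp [qket, bket, hket, EuclideanSpace.inner_eq_star_dotProduct, dotProduct,
      sqrt2_inv_mul_self]

lemma sum_vproj_qket (b : Bool) : ∑ x, vproj (qket b x) = 1 := by
  ext i j
  cases b <;> fin_cases i <;> fin_cases j <;>
    simp [vproj, qket, bket, hket, sqrt2_inv_mul_self] <;> norm_num

lemma vproj_qket_mul_self (b x : Bool) :
    vproj (qket b x) * vproj (qket b x) = vproj (qket b x) := by
  rw [vproj_mul_self, inner_qket_self, one_smul]

lemma vproj_psiBB84 (s r0 r1 : Bool) : vproj (psiBB84 s r0 r1) =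
    bif s then vproj (hket r1) ⊗ₖ vproj (bket r0) else vproj (bket r0) ⊗ₖ vproj (hket r1) := by
  cases s <;> ext ⟨i₁, i₂⟩ ⟨j₁, j₂⟩ <;> simp [vproj, psiBB84] <;> ring

/-- The projection onto the span of the pair states `|ψ^s_{r₀ r₁}⟩` whose bit `r_b` equals `x`;
that bit is carried by the first qubit exactly when `s = b`. -/
def siteProj (s b x : Bool) : Matrix (Fin 2 × Fin 2) (Fin 2 × Fin 2) ℂ :=
  if s = b then vproj (qket b x) ⊗ₖ 1 else 1 ⊗ₖ vproj (qket b x)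

lemma sum_vproj_psiBB84 (s b x : Bool) :
    ∑ a, vproj (psiBB84 s (bif b then a else x) (bif b then x else a)) = siteProj s b x := by
  have hb := sum_vproj_qket false
  have hh := sum_vproj_qket true
  simp only [qket, cond_false, cond_true] at hb hh
  cases s <;> cases b <;>
    simp only [vproj_psiBB84, siteProj, qket, cond_true, cond_false, ← Matrix.sum_kronecker,
      ← Matrix.kronecker_sum, hb, hh] <;> simp

lemma siteProj_mul_self (s b x : Bool) : siteProj s b x * siteProj s b x = siteProj s b x := by
  unfold siteProj
  split_ifs <;> simp [← mul_kronecker_mul, vproj_qket_mul_self]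

lemma siteProj_commute (s b x y : Bool) : Commute (siteProj s b x) (siteProj s (!b) y) := by
  cases s <;> cases b <;> simp [Commute, SemiconjBy, siteProj, ← mul_kronecker_mul]

lemma siteProj_mul_siteProj_not_mul (s b x y : Bool) :
    siteProj s b x * siteProj (!s) (!b) y * siteProj s b x = (2⁻¹ : ℂ) • siteProj s b x := by
  have h := vproj_mul_vproj_mul_vproj (qket b x) (qket (!b) y)
  rw [inner_qket_mul_inner_qket_not] at h
  cases b <;> simp only [Bool.not_false, Bool.not_true] at h <;>
    cases s <;> simp [siteProj, ← mul_kronecker_mul, h, smul_kronecker, kronecker_smul]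

lemma siteProj_sandwich_mul_self (s k b x y : Bool) :
    siteProj s b x * siteProj (xor s k) (!b) y * siteProj s b x *
        (siteProj s b x * siteProj (xor s k) (!b) y * siteProj s b x) =
      (if k then (2⁻¹ : ℂ) else 1) •
        (siteProj s b x * siteProj (xor s k) (!b) y * siteProj s b x) := by
  cases k
  · simpa using sandwich_mul_self_of_commute (siteProj_mul_self s b x)
      (siteProj_mul_self s (!b) y) (siteProj_commute s b x y)
  · simpa using sandwich_mul_self_of_eq_smul (siteProj_mul_self s b x)
      (siteProj_mul_siteProj_not_mul s b x y)

section Strings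

variable {n : ℕ}

/-- The projection onto the span of the string states `|Ψ^s_{r₀ r₁}⟩` with `r_b = x`. -/
def bb84Proj (s : Fin n → Bool) (b : Bool) (x : Fin n → Bool) :
    Matrix (Fin n → Fin 2 × Fin 2) (Fin n → Fin 2 × Fin 2) ℂ :=
  piKron fun j => siteProj (s j) b (x j)

lemma vproj_PsiBB84 (s r0 r1 : Fin n → Bool) :
    vproj (PsiBB84 s r0 r1) = piKron fun j => vproj (psiBB84 (s j) (r0 j) (r1 j)) := by
  ext f g
  simp [vproj, PsiBB84, Finset.prod_mul_distrib]

lemma sum_vproj_PsiBB84 (s : Fin n → Bool) (b : Bool) (x : Fin n → Bool) :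
    ∑ z, vproj (PsiBB84 s (rsel b x z) (rsel b z x)) = bb84Proj s b x := by
  have hsel : ∀ u v : Fin n → Bool, ∀ j, rsel b u v j = bif b then v j else u j := by
    intro u v j; cases b <;> rfl
  simp only [vproj_PsiBB84, hsel]
  rw [sum_piKron fun j a => vproj (psiBB84 (s j) (bif b then a else x j) (bif b then x j else a))]
  simp only [sum_vproj_psiBB84, bb84Proj]

lemma sum_vproj_PsiBB84_kronecker {κ κ' : Type*} (s : Fin n → Bool) (b : Bool)
    (M : (Fin n → Bool) → Matrix κ κ' ℂ) :
    ∑ r0, ∑ r1, vproj (PsiBB84 s r0 r1) ⊗ₖ M (rsel b r0 r1) = ∑ x, bb84Proj s b x ⊗ₖ M x := by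
  simp_rw [← sum_vproj_PsiBB84 s b, Matrix.sum_kronecker]
  cases b
  · rfl
  · exact Finset.sum_comm

lemma isHermitian_bb84Proj (s : Fin n → Bool) (b : Bool) (x : Fin n → Bool) :
    (bb84Proj s b x).IsHermitian := by
  rw [IsHermitian, ← sum_vproj_PsiBB84, conjTranspose_sum]
  simp only [vproj_conjTranspose]

lemma prod_ite_eq_pow_hamW {M : Type*} [CommMonoid M] (k : Fin n → Bool) (a : M) :
    ∏ j, (if k j then a else 1) = a ^ hamW k := by
  rw [Finset.prod_ite, Finset.prod_const, Finset.prod_const_one, mul_one, hamW]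

lemma bb84Proj_sandwich_mul_self (s k : Fin n → Bool) (b : Bool) (x y : Fin n → Bool) :
    bb84Proj s b x * bb84Proj (fun j => xor (s j) (k j)) (!b) y * bb84Proj s b x *
        (bb84Proj s b x * bb84Proj (fun j => xor (s j) (k j)) (!b) y * bb84Proj s b x) =
      ((2 : ℂ) ^ hamW k)⁻¹ •
        (bb84Proj s b x * bb84Proj (fun j => xor (s j) (k j)) (!b) y * bb84Proj s b x) := by
  simp only [bb84Proj, piKron_mul, siteProj_sandwich_mul_self, piKron_smul, prod_ite_eq_pow_hamW,
    inv_pow]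

end Strings

lemma kron3_eq_kronecker {ι₀ ι₁ ι₂ : Type*} (A : Matrix ι₀ ι₀ ℂ) (B : Matrix ι₁ ι₁ ℂ)
    (C : Matrix ι₂ ι₂ ℂ) : kron3 A B C = A ⊗ₖ (B ⊗ₖ C) := by
  ext; simp [kron3, mul_assoc]

section Blocks

variable {R : Type*} [CommSemiring R] {X Y Z ι κ κ' : Type*} [Fintype X] [Fintype Y] [Fintype Z]

lemma sum_kronecker_kronecker_one [DecidableEq κ'] (Q : X → Matrix ι ι R)
    (P : X → Matrix κ κ R) (P' : Y → Matrix κ' κ' R) (hP' : ∑ y, P' y = 1) :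
    ∑ x, Q x ⊗ₖ (P x ⊗ₖ 1) = ∑ z : X × Y, Q z.1 ⊗ₖ (P z.1 ⊗ₖ P' z.2) := by
  simp_rw [Fintype.sum_prod_type, ← Matrix.kronecker_sum, hP']

lemma sum_kronecker_one_kronecker [DecidableEq κ] (Q : Y → Matrix ι ι R)
    (P : X → Matrix κ κ R) (P' : Y → Matrix κ' κ' R) (hP : ∑ x, P x = 1) :
    ∑ y, Q y ⊗ₖ (1 ⊗ₖ P' y) = ∑ z : X × Y, Q z.2 ⊗ₖ (P z.1 ⊗ₖ P' z.2) := by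
  simp_rw [Fintype.sum_prod_type_right, ← Matrix.kronecker_sum, ← Matrix.sum_kronecker, hP]

variable [Fintype ι] [Fintype κ]

lemma sum_kronecker_mul_sum_kronecker (A B : Z → Matrix ι ι R) (E : Z → Matrix κ κ R)
    (hidem : ∀ z, E z * E z = E z) (horth : ∀ z z', z ≠ z' → E z * E z' = 0) :
    (∑ z, A z ⊗ₖ E z) * (∑ z, B z ⊗ₖ E z) = ∑ z, (A z * B z) ⊗ₖ E z := by
  rw [Finset.sum_mul_sum]
  refine Finset.sum_congr rfl fun z _ => ?_
  rw [Finset.sum_eq_single z]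
  · rw [← mul_kronecker_mul, hidem]
  · intro z' _ hz'
    rw [← mul_kronecker_mul, horth z z' hz'.symm, kronecker_zero]
  · simp

lemma sum_kronecker_sandwich_mul_self (A B : Z → Matrix ι ι R) (E : Z → Matrix κ κ R)
    (hidem : ∀ z, E z * E z = E z) (horth : ∀ z z', z ≠ z' → E z * E z' = 0) (c : R)
    (hsand : ∀ z, A z * B z * A z * (A z * B z * A z) = c • (A z * B z * A z))
    (F G : Matrix (ι × κ) (ι × κ) R) (hF : F = ∑ z, A z ⊗ₖ E z) (hG : G = ∑ z, B z ⊗ₖ E z) :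
    F * G * F * (F * G * F) = c • (F * G * F) := by
  have hFGF : F * G * F = ∑ z, (A z * B z * A z) ⊗ₖ E z := by
    rw [hF, hG, sum_kronecker_mul_sum_kronecker _ _ E hidem horth,
      sum_kronecker_mul_sum_kronecker _ _ E hidem horth]
  rw [hFGF, sum_kronecker_mul_sum_kronecker _ _ E hidem horth, Finset.smul_sum]
  simp only [hsand, smul_kronecker]

end Blocks

lemma isHermitian_sum_kronecker {Z ι κ : Type*} [Fintype Z] {A : Z → Matrix ι ι ℂ}
    {E : Z → Matrix κ κ ℂ} (hA : ∀ z, (A z).IsHermitian) (hE : ∀ z, (E z).IsHermitian) :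
    (∑ z, A z ⊗ₖ E z).IsHermitian := by
  simp only [IsHermitian, conjTranspose_sum, conjTranspose_kronecker, (hA _).eq, (hE _).eq]

lemma IsProjMeasurement.kronecker {X Y ι κ : Type*} [Fintype X] [Fintype Y] [Fintype ι]
    [DecidableEq ι] [Fintype κ] [DecidableEq κ] {P : X → Matrix ι ι ℂ} {P' : Y → Matrix κ κ ℂ}
    (hP : IsProjMeasurement P) (hP' : IsProjMeasurement P') :
    IsProjMeasurement fun z : X × Y => P z.1 ⊗ₖ P' z.2 := by
  obtain ⟨hidem, hherm, horth, hsum⟩ := hP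
  obtain ⟨hidem', hherm', horth', hsum'⟩ := hP'
  refine ⟨fun z => ?_, fun z => ?_, fun z z' hz => ?_, ?_⟩
  · rw [← mul_kronecker_mul, hidem, hidem']
  · rw [conjTranspose_kronecker, hherm, hherm']
  · rw [← mul_kronecker_mul]
    by_cases h : z.1 = z'.1
    · rw [horth' _ _ fun h' => hz (Prod.ext h h'), kronecker_zero]
    · rw [horth _ _ h, zero_kronecker]
  · simp_rw [Fintype.sum_prod_type, ← Matrix.kronecker_sum, ← Matrix.sum_kronecker, hsum, hsum',
      one_kronecker_one]

theorem stmt4_general {n d0 d1 : ℕ} (s k : Fin n → Bool) (b' : Bool)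
    (Pi0 : (Fin n → Bool) → Matrix (Fin d0) (Fin d0) ℂ)
    (Pi1 : (Fin n → Bool) → Matrix (Fin d1) (Fin d1) ℂ)
    (hPi0 : IsProjMeasurement Pi0) (hPi1 : IsProjMeasurement Pi1)
    (F G : Matrix ((Fin n → Fin 2 × Fin 2) × Fin d0 × Fin d1)
      ((Fin n → Fin 2 × Fin 2) × Fin d0 × Fin d1) ℂ)
    (hF : F = ∑ r0 : Fin n → Bool, ∑ r1 : Fin n → Bool,
      kron3 (vproj (PsiBB84 s r0 r1)) (Pi0 (rsel b' r0 r1)) 1)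
    (hG : G = ∑ r0 : Fin n → Bool, ∑ r1 : Fin n → Bool,
      kron3 (vproj (PsiBB84 (fun j => xor (s j) (k j)) r0 r1)) 1 (Pi1 (rsel (!b') r0 r1))) :
    ((2 : ℂ) ^ hamW k • (F * G * F)) * ((2 : ℂ) ^ hamW k • (F * G * F))
        = (2 : ℂ) ^ hamW k • (F * G * F)
      ∧ ((2 : ℂ) ^ hamW k • (F * G * F))ᴴ = (2 : ℂ) ^ hamW k • (F * G * F) := by
  simp only [kron3_eq_kronecker] at hF hG
  rw [sum_vproj_PsiBB84_kronecker s b' fun x => Pi0 x ⊗ₖ 1,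
    sum_kronecker_kronecker_one _ _ Pi1 hPi1.2.2.2] at hF
  rw [sum_vproj_PsiBB84_kronecker _ (!b') fun y => 1 ⊗ₖ Pi1 y,
    sum_kronecker_one_kronecker _ Pi0 _ hPi0.2.2.2] at hG
  obtain ⟨hidem, hherm, horth, -⟩ := hPi0.kronecker hPi1
  have hsq := sum_kronecker_sandwich_mul_self _ _ _ hidem horth _
    (fun z => bb84Proj_sandwich_mul_self s k b' z.1 z.2) F G hF hG
  have hFherm : F.IsHermitian := hF ▸ isHermitian_sum_kronecker
    (fun z => isHermitian_bb84Proj s b' z.1) hherm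
  have hGherm : G.IsHermitian := hG ▸ isHermitian_sum_kronecker
    (fun z => isHermitian_bb84Proj _ (!b') z.2) hherm
  have hFGFherm : (F * G * F).IsHermitian := by
    simpa [hFherm.eq] using isHermitian_mul_mul_conjTranspose F hGherm
  have hc : (2 : ℂ) ^ hamW k ≠ 0 := pow_ne_zero _ two_ne_zero
  constructor
  · rw [smul_mul_smul_comm, hsq, smul_smul, mul_assoc, mul_inv_cancel₀ hc, mul_one]
  · rw [conjTranspose_smul, hFGFherm.eq]
    simp

/-- `2^{W(k)} · F G F` is an orthogonal projection, where `F` and `G` are the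
projectors built from the BB84 string states and two projective measurements. -/
theorem stmt4 {n d0 d1 : ℕ} (hn : 1 ≤ n) (s k : Fin n → Bool) (b' : Bool)
    (Pi0 : (Fin n → Bool) → Matrix (Fin d0) (Fin d0) ℂ)
    (Pi1 : (Fin n → Bool) → Matrix (Fin d1) (Fin d1) ℂ)
    (hPi0 : IsProjMeasurement Pi0) (hPi1 : IsProjMeasurement Pi1)
    (F G : Matrix ((Fin n → Fin 2 × Fin 2) × Fin d0 × Fin d1)
      ((Fin n → Fin 2 × Fin 2) × Fin d0 × Fin d1) ℂ)
    (hF : F = ∑ r0 : Fin n → Bool, ∑ r1 : Fin n → Bool,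
      kron3 (vproj (PsiBB84 s r0 r1)) (Pi0 (rsel b' r0 r1)) 1)
    (hG : G = ∑ r0 : Fin n → Bool, ∑ r1 : Fin n → Bool,
      kron3 (vproj (PsiBB84 (fun j => xor (s j) (k j)) r0 r1)) 1 (Pi1 (rsel (!b') r0 r1))) :
    ((2 : ℂ) ^ hamW k • (F * G * F)) * ((2 : ℂ) ^ hamW k • (F * G * F))
        = (2 : ℂ) ^ hamW k • (F * G * F)
      ∧ ((2 : ℂ) ^ hamW k • (F * G * F))ᴴ = (2 : ℂ) ^ hamW k • (F * G * F) :=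
  stmt4_general s k b' Pi0 Pi1 hPi0 hPi1 F G hF hG
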